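/- Assume that 2^μ = μ⁺ for every singular cardinal μ and that there are no regular limit cardinals (no weakly inaccessible cardinals). Then for every set A of infinite regular cardinals, spec(A) = pcf(A). -/

import Mathlib

/-!
Both sides equal `A ∪ {μ⁺ | μ an infinite limit point of A}`.

An ultrafilter `D` on `A` is principal at some `a ∈ A`, converges from below to a limit point `μ`
of `A`, or concentrates above every cardinal. A family in `∏A` is dominated modulo `D` as soon as,
for `D`-almost all `a`, it splits into fewer than `a` pieces of size `< a` (bound each regular
coordinate separately). So `cf(∏A/D) = a` in the first case, and in the third every family of size
`κ` is dominated, so the cofinality is no such `κ`. In the second case `μ` is singular (there are no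
weakly inaccessibles), so splitting along a cofinal sequence of length `cf μ` shows that families of
size `μ` are dominated, while `|∏(A ∩ μ)| ≤ μ^μ = 2^μ = μ⁺`; hence `cf(∏A/D) = μ⁺`. More generally
`|∏C| ≤ (sup C)⁺` for bounded `C`, by induction on `sup C`.

For the spectrum, `a ∈ A` is witnessed by the functions supported at `a`, and `μ⁺` by a
`<_D`-increasing `μ⁺`-sequence that is cofinal modulo `D`. Conversely, if `κ ∈ spec A \ A` is
witnessed by `F`, the restrictions of members of `F` to `A ∩ κ` take `κ` values: otherwise `κ` of
them agree below `κ`, and are then bounded since all coordinates above `κ` are regular and `> κ`.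
Thus `κ ≤ |∏(A ∩ κ)| ≤ λ⁺` for `λ = sup (A ∩ κ)`, which forces `κ = λ⁺` with `λ` a limit point
of `A`.
-/

universe u

open Cardinal Set

namespace TukeySpec

/-- A subset `S` of a preorder is cofinal if every element has an upper bound in `S`. -/
def IsCofinal {P : Type*} [Preorder P] (S : Set P) : Prop :=
  ∀ p : P, ∃ s ∈ S, p ≤ s

/-- `Q` is a Tukey quotient of `P` (i.e. `P ≥_T Q`): there is a map `P → Q`
sending cofinal sets to cofinal sets. -/
def TukeyQuot (P : Type*) (Q : Type*) [Preorder P] [Preorder Q] : Prop :=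
  ∃ φ : P → Q, ∀ S : Set P, IsCofinal S → IsCofinal (φ '' S)

/-- `P` has calibre `(κ, l, m)`. -/
def Calibre (P : Type u) [Preorder P] (κ l m : Cardinal.{u}) : Prop :=
  ∀ P' : Set P, #P' = κ → ∃ R ⊆ P', #R = l ∧ ∀ B ⊆ R, #B = m → BddAbove B

/-- `P` has calibre `κ` (the simplified form): every `κ`-sized subset has a
`κ`-sized subset which is bounded in `P`. -/
def CalibreSimple (P : Type u) [Preorder P] (κ : Cardinal.{u}) : Prop :=
  ∀ P' : Set P, #P' = κ → ∃ R ⊆ P', #R = κ ∧ BddAbove R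

/-- The Tukey spectrum of a poset: all regular cardinals `κ` with `P ≥_T κ`,
where `κ` carries its usual (ordinal) ordering. -/
def specPoset (P : Type u) [Preorder P] : Set Cardinal.{u} :=
  {κ | κ.IsRegular ∧ TukeyQuot P ↥(Set.Iio κ.ord)}

/-- The product `∏A` of a set of cardinals: all functions on `A` with
`f a < a` (as ordinals). -/
def piSet (A : Set Cardinal.{0}) : Set (↥A → Ordinal.{0}) :=
  {f | ∀ a : ↥A, f a < (a : Cardinal).ord}

/-- A family of members of `∏A` is bounded if it has an upper bound in `(∏A, ≤)`
(pointwise order). -/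
def BddIn (A : Set Cardinal.{0}) (S : Set (↥A → Ordinal.{0})) : Prop :=
  ∃ h ∈ piSet A, ∀ f ∈ S, ∀ a : ↥A, f a ≤ h a

/-- The Tukey spectrum of a set `A` of regular cardinals: all regular `κ` for which
there is a `κ`-sized family `F ⊆ ∏A` all of whose `κ`-sized subfamilies are
unbounded in `(∏A, ≤)`. -/
def spec (A : Set Cardinal.{0}) : Set Cardinal.{0} :=
  {κ | κ.IsRegular ∧ ∃ F ⊆ piSet A, #F = Cardinal.lift.{1} κ ∧
    ∀ F₀ ⊆ F, #F₀ = Cardinal.lift.{1} κ → ¬ BddIn A F₀}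

/-- `cf(∏A/D)`: the least cardinality of a subset of `∏A` which is cofinal
modulo the ultrafilter `D`. -/
noncomputable def cofUlt (A : Set Cardinal.{0}) (D : Ultrafilter ↥A) : Cardinal.{1} :=
  sInf {c : Cardinal.{1} | ∃ S ⊆ piSet A, #S = c ∧
    ∀ f ∈ piSet A, ∃ g ∈ S, {a : ↥A | f a ≤ g a} ∈ D}

/-- `pcf(A)`: the set of all cofinalities `cf(∏A/D)` as `D` ranges over
ultrafilters on `A`. -/
def pcf (A : Set Cardinal.{0}) : Set Cardinal.{0} :=
  {κ | ∃ D : Ultrafilter ↥A, Cardinal.lift.{1} κ = cofUlt A D}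

/-- `ub(F)`: the set of coordinates `a ∈ A` where the family `F` is unbounded. -/
def ub (A : Set Cardinal.{0}) (F : Set (↥A → Ordinal.{0})) : Set ↥A :=
  {a | ∀ β < (a : Cardinal).ord, ∃ f ∈ F, β < f a}

/-- The strong part of the Tukey spectrum: `l ∈ spec*(A)` iff there is an
`l`-sized family `F ⊆ ∏A` such that every `l`-sized subfamily has a set of
unbounded coordinates which is unbounded in `sup A`. -/
def specStarMem (A : Set Cardinal.{0}) (l : Cardinal.{0}) : Prop :=
  l.IsRegular ∧ ∃ F ⊆ piSet A, #F = Cardinal.lift.{1} l ∧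
    ∀ F₀ ⊆ F, #F₀ = Cardinal.lift.{1} l →
      ∀ β < sSup A, ∃ a ∈ ub A F₀, β < (a : Cardinal)

/-- `κ` is a limit point of the set `X` of cardinals. -/
def IsLimitPt (X : Set Cardinal.{0}) (κ : Cardinal.{0}) : Prop :=
  ∀ β < κ, ∃ x ∈ X, β < x ∧ x < κ

/-- `C` is a closed unbounded subset of `κ`. -/
def IsClubIn (C : Set Ordinal.{0}) (κ : Ordinal.{0}) : Prop :=
  C ⊆ Set.Iio κ ∧ (∀ β < κ, ∃ o ∈ C, β < o) ∧
    ∀ β < κ, β ≠ 0 → (∀ γ < β, ∃ o ∈ C, γ < o ∧ o < β) → β ∈ C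

/-- A set `S` of cardinals is stationary in `κ`: it meets every club of `κ`. -/
def StatIn (S : Set Cardinal.{0}) (κ : Cardinal.{0}) : Prop :=
  ∀ C : Set Ordinal.{0}, IsClubIn C κ.ord → ∃ a ∈ S, a.ord ∈ C

/-- `κ` is Mahlo: strongly inaccessible and the regular cardinals below `κ`
are stationary in `κ`. -/
def IsMahlo (κ : Cardinal.{0}) : Prop :=
  κ.IsInaccessible ∧ StatIn {a | a < κ ∧ a.IsRegular} κ

/-- `κ` is weakly compact: strongly inaccessible and `κ → (κ)²₂`. -/
def IsWeaklyCompact (κ : Cardinal.{0}) : Prop :=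
  κ.IsInaccessible ∧
    ∀ c : Ordinal.{0} → Ordinal.{0} → Bool,
      ∃ H ⊆ Set.Iio κ.ord, #H = Cardinal.lift.{1} κ ∧
        ∃ b : Bool, ∀ α ∈ H, ∀ β ∈ H, α < β → c α β = b

/-- `θ` carries a Jónsson algebra: there is `F` from finite subsets of `θ` to `θ`
such that `F` applied to finite subsets of any `θ`-sized `H ⊆ θ` covers `θ`. -/
def CarriesJonsson (θ : Cardinal.{0}) : Prop :=
  ∃ F : Finset Ordinal.{0} → Ordinal.{0},
    (∀ s : Finset Ordinal.{0}, (↑s : Set Ordinal) ⊆ Set.Iio θ.ord → F s < θ.ord) ∧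
    ∀ H ⊆ Set.Iio θ.ord, #H = Cardinal.lift.{1} θ →
      ∀ γ < θ.ord, ∃ s : Finset Ordinal.{0}, (↑s : Set Ordinal) ⊆ H ∧ F s = γ

/-- `cf(∏A/J_bd)`: the least cardinality of a subset of `∏A` cofinal modulo
the ideal of bounded subsets of `A`. -/
noncomputable def cofJbd (A : Set Cardinal.{0}) : Cardinal.{1} :=
  sInf {c : Cardinal.{1} | ∃ S ⊆ piSet A, #S = c ∧
    ∀ f ∈ piSet A, ∃ g ∈ S, ∃ b < sSup A, ∀ a : ↥A, b < (a : Cardinal) → f a ≤ g a}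

/-- `μ` is a limit cardinal. -/
def IsLimitCard (μ : Cardinal.{0}) : Prop :=
  ℵ₀ ≤ μ ∧ ∀ ν < μ, Order.succ ν < μ

open Ordinal Filter

section Coordinates

variable {A : Set Cardinal.{0}}

lemma zero_mem_piSet (hA : ∀ a ∈ A, a.IsRegular) : (0 : ↥A → Ordinal.{0}) ∈ piSet A :=
  fun a => Cardinal.ord_pos.2 (hA a a.2).pos

lemma add_one_mem_piSet (hA : ∀ a ∈ A, a.IsRegular) {f : ↥A → Ordinal.{0}}
    (hf : f ∈ piSet A) : (fun a => f a + 1) ∈ piSet A :=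
  fun a => (isSuccLimit_ord (hA a a.2).aleph0_le).add_one_lt (hf a)

lemma indicator_mem_piSet (hA : ∀ a ∈ A, a.IsRegular) (s : Set ↥A) {f : ↥A → Ordinal.{0}}
    (hf : f ∈ piSet A) : s.indicator f ∈ piSet A := by
  intro a
  by_cases ha : a ∈ s
  · simpa [ha] using hf a
  · simpa [ha] using zero_mem_piSet hA a

lemma exists_lt_ord_forall_apply_lt (hA : ∀ a ∈ A, a.IsRegular) {S : Set (↥A → Ordinal.{0})}
    (hS : S ⊆ piSet A) (a : ↥A) (hSa : #S < Cardinal.lift.{1} (a : Cardinal)) :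
    ∃ β < (a : Cardinal).ord, ∀ f ∈ S, f a < β := by
  have ha := hA a a.2
  have hsup : sSup ((fun f => f a) '' S) < (a : Cardinal).ord := by
    refine Ordinal.sSup_lt_of_lt_cof ?_ (by rintro _ ⟨f, hf, rfl⟩; exact hS hf a)
    rw [← Ordinal.lift_cof, ha.cof_ord]
    exact mk_image_le.trans_lt hSa
  refine ⟨_, (isSuccLimit_ord ha.aleph0_le).succ_lt hsup, fun f hf => Order.lt_succ_iff.2 ?_⟩
  exact le_csSup ⟨_, by rintro _ ⟨g, hg, rfl⟩; exact (hS hg a).le⟩ ⟨f, hf, rfl⟩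

end Coordinates

section OrdinalIndexed

variable {α : Type 1}

lemma mk_image_Iio_lt (e : Ordinal.{0} → α) {o : Ordinal.{0}} {c : Cardinal.{0}}
    (ho : o < c.ord) : #(e '' Iio o) < Cardinal.lift.{1} c :=
  mk_image_le.trans_lt (by rwa [Cardinal.mk_Iio_ordinal, Cardinal.lift_lt, ← Cardinal.lt_ord])

lemma exists_subset_image_Iio [Nonempty α] {S : Set α} {c : Cardinal.{0}}
    (h : #S ≤ Cardinal.lift.{1} c) : ∃ e : Ordinal.{0} → α, S ⊆ e '' Iio c.ord := by
  rw [← Cardinal.card_ord c, ← Cardinal.mk_Iio_ordinal] at h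
  obtain ⟨emb⟩ := h
  have hinj : Function.Injective fun x : S => (emb x : Ordinal.{0}) :=
    Subtype.val_injective.comp emb.injective
  refine ⟨Function.extend (fun x : S => (emb x : Ordinal.{0})) Subtype.val
    fun _ => Classical.arbitrary α, fun g hg => ⟨emb ⟨g, hg⟩, (emb ⟨g, hg⟩).2, ?_⟩⟩
  exact hinj.extend_apply _ _ ⟨g, hg⟩

lemma exists_mem_Ico_of_mk_eq {e : Ordinal.{0} → α} {c : Cardinal.{0}} {F : Set α}
    (hF : F ⊆ e '' Iio c.ord) (hFc : #F = Cardinal.lift.{1} c) {j : Ordinal.{0}}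
    (hj : j < c.ord) : ∃ i, j ≤ i ∧ i < c.ord ∧ e i ∈ F := by
  by_contra! h
  have hFj : F ⊆ e '' Iio j := by
    intro x hx
    obtain ⟨i, hi, rfl⟩ := hF hx
    exact ⟨i, lt_of_not_ge fun hji => h i hji hi hx, rfl⟩
  exact ((mk_le_mk_of_subset hFj).trans_lt (mk_image_Iio_lt e hj)).ne hFc

lemma exists_seq_dominating {R : α → α → Prop} {P : Set α} {μ : Cardinal.{0}}
    (hμ : ℵ₀ ≤ μ)
    (hdom : ∀ W ⊆ P, #W ≤ Cardinal.lift.{1} μ → ∃ y ∈ P, ∀ w ∈ W, R w y)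
    (e : Ordinal.{0} → α) :
    ∃ f : Ordinal.{0} → α, ∀ i < (Order.succ μ).ord,
      f i ∈ P ∧ (∀ j < i, R (f j) (f i)) ∧ ∀ j ≤ i, e j ∈ P → R (e j) (f i) := by
  have hnext : ∀ W : Set α,
      ∃ y, W ⊆ P → #W ≤ Cardinal.lift.{1} μ → y ∈ P ∧ ∀ w ∈ W, R w y := by
    intro W
    by_cases hW : W ⊆ P ∧ #W ≤ Cardinal.lift.{1} μ
    · obtain ⟨y, hy, hR⟩ := hdom W hW.1 hW.2
      exact ⟨y, fun _ _ => ⟨hy, hR⟩⟩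
    · obtain ⟨y, -⟩ := hdom ∅ (empty_subset _) (by simp)
      exact ⟨y, fun h₁ h₂ => absurd ⟨h₁, h₂⟩ hW⟩
  choose next hnext using hnext
  let f : Ordinal.{0} → α := WellFoundedLT.fix (motive := fun _ => α) fun i rec =>
    next (((range fun j : Iio i => rec j j.2) ∪ e '' Iic i) ∩ P)
  have hf : ∀ i, f i = next ((f '' Iio i ∪ e '' Iic i) ∩ P) := fun i => by
    rw [image_eq_range]
    exact WellFoundedLT.fix_eq _ i
  have hIio : ∀ o < (Order.succ μ).ord, #(Iio o) ≤ Cardinal.lift.{1} μ := fun o ho => by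
    rwa [Cardinal.mk_Iio_ordinal, Cardinal.lift_le, ← Order.lt_succ_iff, ← Cardinal.lt_ord]
  have hsmall : ∀ i < (Order.succ μ).ord,
      #↥((f '' Iio i ∪ e '' Iic i) ∩ P) ≤ Cardinal.lift.{1} μ := fun i hi =>
    calc #↥((f '' Iio i ∪ e '' Iic i) ∩ P) ≤ #(f '' Iio i) + #(e '' Iic i) :=
          (mk_le_mk_of_subset inter_subset_left).trans (mk_union_le _ _)
      _ ≤ Cardinal.lift.{1} μ + Cardinal.lift.{1} μ := by
          refine add_le_add (mk_image_le.trans (hIio i hi)) (mk_image_le.trans ?_)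
          rw [← Order.Iio_succ]
          exact hIio _ ((isSuccLimit_ord (hμ.trans (Order.le_succ μ))).succ_lt hi)
      _ = Cardinal.lift.{1} μ := add_eq_self (by simpa using hμ)
  have hfi : ∀ i < (Order.succ μ).ord,
      f i ∈ P ∧ ∀ w ∈ (f '' Iio i ∪ e '' Iic i) ∩ P, R w (f i) := fun i hi =>
    hf i ▸ hnext _ inter_subset_right (hsmall i hi)
  exact ⟨f, fun i hi => ⟨(hfi i hi).1,
    fun j hj => (hfi i hi).2 _ ⟨Or.inl (mem_image_of_mem f hj), (hfi j (hj.trans hi)).1⟩,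
    fun j hj hej => (hfi i hi).2 _ ⟨Or.inr (mem_image_of_mem e hj), hej⟩⟩⟩

end OrdinalIndexed

section Domination

variable {A : Set Cardinal.{0}}

lemma exists_eventually_lt_of_forall_eventually_mk_lt (hA : ∀ a ∈ A, a.IsRegular)
    {l : Filter ↥A} {J : Type 1} (s : J → Set (↥A → Ordinal.{0}))
    (hs : ∀ j, s j ⊆ piSet A)
    (hJ : ∀ᶠ (a : ↥A) in l, #J < Cardinal.lift.{1} (a : Cardinal))
    (hsmall : ∀ j, ∀ᶠ (a : ↥A) in l, #(s j) < Cardinal.lift.{1} (a : Cardinal)) :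
    ∃ g ∈ piSet A, ∀ j, ∀ f ∈ s j, ∀ᶠ (a : ↥A) in l, f a < g a := by
  have hbound : ∀ a : ↥A, ∃ β < (a : Cardinal).ord, #J < Cardinal.lift.{1} (a : Cardinal) →
      ∀ j, #(s j) < Cardinal.lift.{1} (a : Cardinal) → ∀ f ∈ s j, f a < β := by
    intro a
    by_cases hJa : #J < Cardinal.lift.{1} (a : Cardinal)
    · let U := ⋃ j : {j // #(s j) < Cardinal.lift.{1} (a : Cardinal)}, s j
      have hU : #U < Cardinal.lift.{1} (a : Cardinal) :=
        (card_iUnion_lt_iff_forall_of_isRegular (hA a a.2).lift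
          ((mk_subtype_le _).trans_lt hJa)).2 fun j => j.2
      obtain ⟨β, hβ, hlt⟩ :=
        exists_lt_ord_forall_apply_lt hA (S := U) (iUnion_subset fun j => hs j.1) a hU
      exact ⟨β, hβ, fun _ j hj f hf => hlt f (mem_iUnion.2 ⟨⟨j, hj⟩, hf⟩)⟩
    · exact ⟨0, zero_mem_piSet hA a, fun h => absurd h hJa⟩
  choose g hg hgf using hbound
  exact ⟨g, hg, fun j f hf => by
    filter_upwards [hJ, hsmall j] with a hJa hsa using hgf a hJa j hsa f hf⟩

lemma exists_eventually_lt_of_eventually_mk_lt (hA : ∀ a ∈ A, a.IsRegular) {l : Filter ↥A}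
    {S : Set (↥A → Ordinal.{0})} (hS : S ⊆ piSet A)
    (hSl : ∀ᶠ (a : ↥A) in l, #S < Cardinal.lift.{1} (a : Cardinal)) :
    ∃ g ∈ piSet A, ∀ f ∈ S, ∀ᶠ (a : ↥A) in l, f a < g a := by
  obtain ⟨g, hg, hlt⟩ := exists_eventually_lt_of_forall_eventually_mk_lt hA
    (fun _ : PUnit => S) (fun _ => hS) (Eventually.of_forall fun a => by
      simpa using one_lt_aleph0.trans_le (hA a a.2).aleph0_le) fun _ => hSl
  exact ⟨g, hg, hlt PUnit.unit⟩

end Domination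

section Singular

variable {A : Set Cardinal.{0}}

lemma exists_eventually_lt_of_mk_le (hA : ∀ a ∈ A, a.IsRegular) {l : Filter ↥A}
    {μ : Cardinal.{0}} (hμ : ℵ₀ ≤ μ) (hsing : ¬ μ.IsRegular)
    (hl : ∀ β < μ, ∀ᶠ (a : ↥A) in l, β < (a : Cardinal))
    {S : Set (↥A → Ordinal.{0})} (hS : S ⊆ piSet A) (hSμ : #S ≤ Cardinal.lift.{1} μ) :
    ∃ g ∈ piSet A, ∀ f ∈ S, ∀ᶠ (a : ↥A) in l, f a < g a := by
  have hcof : μ.ord.cof < μ := lt_of_not_ge fun h => hsing ⟨hμ, h⟩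
  obtain ⟨e, he⟩ := exists_subset_image_Iio hSμ
  -- `S` is the union of `cof μ` pieces of size `< μ`; eventually both bounds drop below `a`.
  obtain ⟨J, hJcof, hJ⟩ := Order.exists_cof_eq (Iio μ.ord)
  rw [cof_Iio, ← lift_cof] at hJ
  have hsucc : ∀ j : Iio μ.ord, Order.succ j.1 < μ.ord := fun j =>
    (isSuccLimit_ord hμ).succ_lt j.2
  obtain ⟨g, hg, hlt⟩ := exists_eventually_lt_of_forall_eventually_mk_lt hA
    (fun j : J => e '' Iio (Order.succ j.1.1) ∩ S) (fun j => inter_subset_right.trans hS)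
    (by filter_upwards [hl _ hcof] with a ha using hJ ▸ Cardinal.lift_lt.2 ha)
    (fun j => by
      filter_upwards [hl _ (Cardinal.lt_ord.1 (hsucc j))] with a ha
      exact (mk_le_mk_of_subset inter_subset_left).trans_lt
        (mk_image_Iio_lt e (Cardinal.lt_ord.2 ha)))
  refine ⟨g, hg, fun f hf => ?_⟩
  obtain ⟨i, hi, rfl⟩ := he hf
  obtain ⟨j, hjJ, hij⟩ := hJcof ⟨i, hi⟩
  exact hlt ⟨j, hjJ⟩ _ ⟨⟨i, Order.lt_succ_iff.2 (Subtype.mk_le_mk.1 hij), rfl⟩, hf⟩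

end Singular

def CofinalMod (A : Set Cardinal.{0}) (D : Ultrafilter ↥A) (S : Set (↥A → Ordinal.{0})) :
    Prop :=
  ∀ f ∈ piSet A, ∃ g ∈ S, ∀ᶠ (a : ↥A) in D, f a ≤ g a

section Cofinality

variable {A : Set Cardinal.{0}} {D : Ultrafilter ↥A}

lemma cofUlt_le_mk {S : Set (↥A → Ordinal.{0})} (hSA : S ⊆ piSet A) (hS : CofinalMod A D S) :
    cofUlt A D ≤ #S :=
  csInf_le' ⟨S, hSA, rfl, hS⟩

lemma exists_cofinalMod_mk_eq_cofUlt (A : Set Cardinal.{0}) (D : Ultrafilter ↥A) :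
    ∃ S ⊆ piSet A, #S = cofUlt A D ∧ CofinalMod A D S :=
  csInf_mem (s := {c | ∃ S ⊆ piSet A, #S = c ∧ CofinalMod A D S})
    ⟨_, piSet A, subset_rfl, rfl, fun f hf => ⟨f, hf, Eventually.of_forall fun _ => le_rfl⟩⟩

lemma not_cofinalMod_of_forall_eventually_lt {S : Set (↥A → Ordinal.{0})}
    {g : ↥A → Ordinal.{0}} (hg : g ∈ piSet A)
    (hlt : ∀ f ∈ S, ∀ᶠ (a : ↥A) in D, f a < g a) : ¬ CofinalMod A D S := by
  intro hS
  obtain ⟨f, hf, hgf⟩ := hS g hg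
  obtain ⟨a, hfg, hgf⟩ := ((hlt f hf).and hgf).exists
  exact hfg.not_ge hgf

lemma mk_image_indicator_le (B : Set Cardinal.{0}) :
    #((((↑) : ↥A → Cardinal.{0}) ⁻¹' B).indicator '' piSet A) ≤ #(piSet (A ∩ B)) := by
  classical
  let extend (h : ↥(A ∩ B) → Ordinal.{0}) (a : ↥A) : Ordinal.{0} :=
    if ha : (a : Cardinal) ∈ B then h ⟨a, a.2, ha⟩ else 0
  refine (mk_le_mk_of_subset ?_).trans (mk_image_le (f := extend))
  rintro _ ⟨f, hf, rfl⟩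
  refine ⟨fun x => f ⟨x.1, x.2.1⟩, fun x => hf _, funext fun a => ?_⟩
  by_cases ha : (a : Cardinal) ∈ B <;> simp [extend, ha]

lemma cofUlt_le_mk_piSet_inter (hA : ∀ a ∈ A, a.IsRegular) {B : Set Cardinal.{0}}
    (hB : ∀ᶠ (a : ↥A) in D, (a : Cardinal) ∈ B) :
    cofUlt A D ≤ #(piSet (A ∩ B)) := by
  refine (cofUlt_le_mk ?_ fun f hf => ⟨_, mem_image_of_mem _ hf, ?_⟩).trans
    (mk_image_indicator_le B)
  · rintro _ ⟨f, hf, rfl⟩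
    exact indicator_mem_piSet hA _ hf
  · filter_upwards [hB] with a ha
    rw [indicator_of_mem (show a ∈ ((↑) : ↥A → Cardinal.{0}) ⁻¹' B from ha)]

end Cofinality

section ProductCardinality

lemma mk_le_lift_of_forall_le {C : Set Cardinal.{0}} {l : Cardinal.{0}} (hl : ℵ₀ ≤ l)
    (h : ∀ a ∈ C, a ≤ l) : #C ≤ Cardinal.lift.{1} l := by
  have hsub : ord '' C ⊆ Iio (l.ord + 1) := by
    rintro _ ⟨a, ha, rfl⟩
    exact Order.lt_add_one_iff.2 (ord_le_ord.2 (h a ha))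
  calc #C = #(ord '' C) := (mk_image_eq ord_injective).symm
    _ ≤ #(Iio (l.ord + 1)) := mk_le_mk_of_subset hsub
    _ = Cardinal.lift.{1} l := by
      rw [Cardinal.mk_Iio_ordinal, card_add_one, card_ord, Cardinal.add_one_eq hl]

lemma mk_piSet_le_power {C : Set Cardinal.{0}} {l : Cardinal.{0}} (h : ∀ a ∈ C, a ≤ l) :
    #(piSet C) ≤ Cardinal.lift.{1} l ^ #C := by
  have key : #(piSet C) ≤ #(↥C → ↥(Iio l.ord)) := by
    refine mk_le_of_injective
      (f := fun f a => ⟨f.1 a, (f.2 a).trans_le (ord_le_ord.2 (h a a.2))⟩) fun f g hfg => ?_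
    exact Subtype.ext (funext fun a => congrArg Subtype.val (congrFun hfg a))
  rwa [← Cardinal.power_def, Cardinal.mk_Iio_ordinal, card_ord] at key

lemma mk_piSet_le_mul {C : Set Cardinal.{0}} {x : Cardinal.{0}} (hx : x ∈ C) :
    #(piSet C) ≤ Cardinal.lift.{1} x * #(piSet (C \ {x})) := by
  have key : #(piSet C) ≤ #(↥(Iio x.ord) × ↥(piSet (C \ {x}))) := by
    refine mk_le_of_injective (f := fun f => (⟨f.1 ⟨x, hx⟩, f.2 ⟨x, hx⟩⟩,
      ⟨fun a => f.1 ⟨a.1, a.2.1⟩, fun a => f.2 ⟨a.1, a.2.1⟩⟩)) fun f g hfg => ?_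
    obtain ⟨h₁, h₂⟩ := Prod.mk.inj hfg
    refine Subtype.ext (funext fun a => ?_)
    by_cases hax : (a : Cardinal) = x
    · obtain rfl : a = ⟨x, hx⟩ := Subtype.ext hax
      exact congrArg Subtype.val h₁
    · exact congrFun (congrArg Subtype.val h₂) ⟨a.1, a.2, hax⟩
  rwa [Cardinal.mk_prod, Cardinal.lift_id, Cardinal.lift_id, Cardinal.mk_Iio_ordinal,
    card_ord] at key

lemma mk_piSet_inter_singleton_le (A : Set Cardinal.{0}) {x : Cardinal.{0}} (hx : x ≠ 0) :
    #(piSet (A ∩ {x})) ≤ Cardinal.lift.{1} x := by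
  refine (mk_piSet_le_power fun a ha => ha.2.le).trans ?_
  have hle : #↥(A ∩ {x}) ≤ 1 :=
    mk_le_one_iff_set_subsingleton.2 (subsingleton_singleton.anti inter_subset_right)
  simpa using power_le_power_left (by simpa using hx) hle

end ProductCardinality

def SingularGCH : Prop :=
  ∀ μ : Cardinal.{0}, ℵ₀ ≤ μ → ¬ μ.IsRegular → 2 ^ μ = Order.succ μ

def NoWeaklyInaccessible : Prop :=
  ∀ κ : Cardinal.{0}, ¬ (ℵ₀ < κ ∧ κ.IsRegular ∧ ∀ ν < κ, Order.succ ν < κ)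

section LimitPoints

lemma IsLimitPt.mono {X Y : Set Cardinal.{0}} {μ : Cardinal.{0}} (h : IsLimitPt X μ)
    (hXY : X ⊆ Y) : IsLimitPt Y μ := fun β hβ =>
  let ⟨x, hx, hβx, hxμ⟩ := h β hβ
  ⟨x, hXY hx, hβx, hxμ⟩

lemma isLimitPt_sSup {C : Set Cardinal.{0}} (hC : BddAbove C) (hnot : sSup C ∉ C) :
    IsLimitPt C (sSup C) := by
  intro β hβ
  rcases C.eq_empty_or_nonempty with rfl | hne
  · simp at hβ
  obtain ⟨x, hx, hβx⟩ := exists_lt_of_lt_csSup hne hβ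
  exact ⟨x, hx, hβx, (le_csSup hC hx).lt_of_ne fun h => hnot (h ▸ hx)⟩

lemma sSup_inter_Iio_of_isLimitPt {A : Set Cardinal.{0}} {μ : Cardinal.{0}} (h : IsLimitPt A μ) :
    sSup (A ∩ Iio μ) = μ := by
  refine le_antisymm (csSup_le' fun x hx => hx.2.le) (le_of_forall_lt fun β hβ => ?_)
  obtain ⟨x, hx, hβx, hxμ⟩ := h β hβ
  exact lt_csSup_of_lt ⟨μ, fun y hy => hy.2.le⟩ ⟨hx, hxμ⟩ hβx

lemma NoWeaklyInaccessible.not_isRegular (h : NoWeaklyInaccessible) {X : Set Cardinal.{0}}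
    (hX : ∀ x ∈ X, ℵ₀ ≤ x) {μ : Cardinal.{0}} (hlim : IsLimitPt X μ) (hμ : μ ≠ 0) :
    ¬ μ.IsRegular := by
  intro hreg
  obtain ⟨x, hx, -, hxμ⟩ := hlim 0 (pos_iff_ne_zero.2 hμ)
  refine h μ ⟨(hX x hx).trans_lt hxμ, hreg, fun ν hν => ?_⟩
  obtain ⟨y, -, hνy, hyμ⟩ := hlim ν hν
  exact (Order.succ_le_of_lt hνy).trans_lt hyμ

end LimitPoints

section SingularProducts

variable {C : Set Cardinal.{0}}

lemma sSup_diff_singleton_lt (hinacc : NoWeaklyInaccessible) (hC : BddAbove C)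
    (hCreg : ∀ a ∈ C, a.IsRegular) (hmem : sSup C ∈ C) : sSup (C \ {sSup C}) < sSup C := by
  refine (csSup_le_csSup' hC sdiff_subset).lt_of_ne fun heq => ?_
  have hlim := isLimitPt_sSup (C := C \ {sSup C}) (hC.mono sdiff_subset)
    (by rw [heq]; exact fun h => h.2 rfl)
  rw [heq] at hlim
  exact hinacc.not_isRegular (fun x hx => (hCreg x hx.1).aleph0_le) hlim
    (hCreg _ hmem).pos.ne' (hCreg _ hmem)

lemma mk_piSet_le_succ_sSup_of_sSup_notMem (hgch : SingularGCH)
    (hinacc : NoWeaklyInaccessible) (hC : BddAbove C) (hCreg : ∀ a ∈ C, a.IsRegular)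
    (hnot : sSup C ∉ C) : #(piSet C) ≤ Cardinal.lift.{1} (Order.succ (sSup C)) := by
  rcases C.eq_empty_or_nonempty with rfl | ⟨x, hx⟩
  · refine (mk_le_one_iff_set_subsingleton.2 fun f _ g _ => funext fun a => a.2.elim).trans ?_
    simp
  set l := sSup C
  have hl : ℵ₀ ≤ l := (hCreg x hx).aleph0_le.trans (le_csSup hC hx)
  have hsing := hinacc.not_isRegular (fun a ha => (hCreg a ha).aleph0_le)
    (isLimitPt_sSup hC hnot) (aleph0_pos.trans_le hl).ne'
  have hle : ∀ a ∈ C, a ≤ l := fun a ha => le_csSup hC ha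
  calc #(piSet C) ≤ Cardinal.lift.{1} l ^ #C := mk_piSet_le_power hle
    _ ≤ Cardinal.lift.{1} l ^ Cardinal.lift.{1} l :=
      power_le_power_left (by simpa using (aleph0_pos.trans_le hl).ne')
        (mk_le_lift_of_forall_le hl hle)
    _ = Cardinal.lift.{1} (Order.succ l) := by
      rw [← Cardinal.lift_power, power_self_eq hl, hgch l hl hsing]

lemma mk_piSet_le (hgch : SingularGCH) (hinacc : NoWeaklyInaccessible) (hC : BddAbove C)
    (hCreg : ∀ a ∈ C, a.IsRegular) :
    #(piSet C) ≤ Cardinal.lift.{1} (Order.succ (sSup C)) ∧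
      (sSup C ∈ C → #(piSet C) ≤ Cardinal.lift.{1} (sSup C)) := by
  obtain ⟨l, hl⟩ : ∃ l, sSup C = l := ⟨_, rfl⟩
  induction l using WellFoundedLT.induction generalizing C with
  | _ l IH =>
  subst hl
  have hmem : sSup C ∈ C → #(piSet C) ≤ Cardinal.lift.{1} (sSup C) := fun hmem => by
    have hlt := sSup_diff_singleton_lt hinacc hC hCreg hmem
    have hdiff := (IH _ hlt (hC.mono sdiff_subset) (fun a ha => hCreg a ha.1) rfl).1
    calc #(piSet C) ≤ Cardinal.lift.{1} (sSup C) * #(piSet (C \ {sSup C})) :=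
          mk_piSet_le_mul hmem
      _ ≤ Cardinal.lift.{1} (sSup C) * Cardinal.lift.{1} (sSup C) := by
          gcongr
          exact hdiff.trans (Cardinal.lift_le.2 (Order.succ_le_of_lt hlt))
      _ = Cardinal.lift.{1} (sSup C) := mul_eq_self (by simpa using (hCreg _ hmem).aleph0_le)
  refine ⟨?_, hmem⟩
  by_cases h : sSup C ∈ C
  · exact (hmem h).trans (Cardinal.lift_le.2 (Order.le_succ _))
  · exact mk_piSet_le_succ_sSup_of_sSup_notMem hgch hinacc hC hCreg h

lemma mk_piSet_inter_Iio_le (hgch : SingularGCH) (hinacc : NoWeaklyInaccessible)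
    {A : Set Cardinal.{0}} (hA : ∀ a ∈ A, a.IsRegular) {μ : Cardinal.{0}}
    (hlim : IsLimitPt A μ) : #(piSet (A ∩ Iio μ)) ≤ Cardinal.lift.{1} (Order.succ μ) := by
  simpa [sSup_inter_Iio_of_isLimitPt hlim] using (mk_piSet_le (C := A ∩ Iio μ) hgch hinacc
    ⟨μ, fun x hx => hx.2.le⟩ fun a ha => hA a ha.1).1

end SingularProducts

def TendsUpTo {A : Set Cardinal.{0}} (l : Filter ↥A) (μ : Cardinal.{0}) : Prop :=
  (∀ᶠ (a : ↥A) in l, (a : Cardinal) < μ) ∧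
    ∀ β < μ, ∀ᶠ (a : ↥A) in l, β < (a : Cardinal)

section TendsUpTo

variable {A : Set Cardinal.{0}} {l : Filter ↥A} {μ : Cardinal.{0}}

lemma TendsUpTo.isLimitPt [l.NeBot] (h : TendsUpTo l μ) : IsLimitPt A μ := fun β hβ =>
  let ⟨a, hβa, haμ⟩ := ((h.2 β hβ).and h.1).exists
  ⟨a, a.2, hβa, haμ⟩

lemma TendsUpTo.aleph0_lt (hA : ∀ a ∈ A, a.IsRegular) [l.NeBot] (h : TendsUpTo l μ) :
    ℵ₀ < μ :=
  let ⟨a, ha⟩ := h.1.exists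
  (hA a a.2).aleph0_le.trans_lt ha

lemma exists_ultrafilter_tendsUpTo (hlim : IsLimitPt A μ) (hμ : μ ≠ 0) :
    ∃ D : Ultrafilter ↥A, TendsUpTo (D : Filter ↥A) μ := by
  obtain ⟨x, hx, -, hxμ⟩ := hlim 0 (pos_iff_ne_zero.2 hμ)
  have : Nonempty {a : ↥A // (a : Cardinal) < μ} := ⟨⟨⟨x, hx⟩, hxμ⟩⟩
  let F : Filter ↥A := map Subtype.val (atTop : Filter {a : ↥A // (a : Cardinal) < μ})
  have hF : ∀ᶠ (a : ↥A) in F, (a : Cardinal) < μ :=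
    eventually_map.2 (.of_forall fun a => a.2)
  refine ⟨.of F, hF.filter_mono (Ultrafilter.of_le F),
    fun β hβ => Eventually.filter_mono (Ultrafilter.of_le F) ?_⟩
  obtain ⟨y, hy, hβy, hyμ⟩ := hlim β hβ
  exact eventually_map.2 <|
    eventually_atTop.2 ⟨⟨⟨y, hy⟩, hyμ⟩, fun b hb => hβy.trans_le hb⟩

end TendsUpTo

section PcfComputation

variable {A : Set Cardinal.{0}} {D : Ultrafilter ↥A}

lemma cofUlt_eq_of_eventually_eq (hA : ∀ a ∈ A, a.IsRegular) {a₀ : ↥A}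
    (hD : ∀ᶠ a in D, a = a₀) : cofUlt A D = Cardinal.lift.{1} (a₀ : Cardinal) := by
  refine le_antisymm ((cofUlt_le_mk_piSet_inter hA (B := {(a₀ : Cardinal)}) ?_).trans
    (mk_piSet_inter_singleton_le A (hA a₀ a₀.2).pos.ne')) ?_
  · filter_upwards [hD] with a ha
    rw [ha]
    rfl
  obtain ⟨S, hSA, hSD, hS⟩ := exists_cofinalMod_mk_eq_cofUlt A D
  rw [← hSD]
  by_contra! h
  obtain ⟨g, hg, hlt⟩ := exists_eventually_lt_of_eventually_mk_lt hA hSA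
    (by filter_upwards [hD] with a ha; rwa [ha])
  exact not_cofinalMod_of_forall_eventually_lt hg hlt hS

lemma cofUlt_eq_succ_of_tendsUpTo (hgch : SingularGCH) (hinacc : NoWeaklyInaccessible)
    (hA : ∀ a ∈ A, a.IsRegular) {μ : Cardinal.{0}} (hD : TendsUpTo (D : Filter ↥A) μ) :
    cofUlt A D = Cardinal.lift.{1} (Order.succ μ) := by
  have hlim := hD.isLimitPt
  have hμ := (hD.aleph0_lt hA).le
  have hsing := hinacc.not_isRegular (fun a ha => (hA a ha).aleph0_le) hlim
    (aleph0_pos.trans_le hμ).ne'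
  refine le_antisymm ((cofUlt_le_mk_piSet_inter hA (B := Iio μ) hD.1).trans
    (mk_piSet_inter_Iio_le hgch hinacc hA hlim)) ?_
  obtain ⟨S, hSA, hSD, hS⟩ := exists_cofinalMod_mk_eq_cofUlt A D
  rw [← hSD, Cardinal.lift_succ, Order.succ_le_iff]
  by_contra! h
  obtain ⟨g, hg, hlt⟩ := exists_eventually_lt_of_mk_le hA hμ hsing hD.2 hSA h
  exact not_cofinalMod_of_forall_eventually_lt hg hlt hS

lemma lift_ne_cofUlt (hA : ∀ a ∈ A, a.IsRegular)
    (hD : ∀ κ : Cardinal.{0}, ∀ᶠ (a : ↥A) in D, κ < (a : Cardinal))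
    (κ : Cardinal.{0}) : Cardinal.lift.{1} κ ≠ cofUlt A D := by
  obtain ⟨S, hSA, hSD, hS⟩ := exists_cofinalMod_mk_eq_cofUlt A D
  intro hκ
  obtain ⟨g, hg, hlt⟩ := exists_eventually_lt_of_eventually_mk_lt hA hSA
    (by filter_upwards [hD κ] with a ha; rw [hSD, ← hκ]; exact Cardinal.lift_lt.2 ha)
  exact not_cofinalMod_of_forall_eventually_lt hg hlt hS

lemma eventually_eq_or_tendsUpTo_or_forall_eventually_lt (D : Ultrafilter ↥A) :
    (∃ a₀ : ↥A, ∀ᶠ a in D, a = a₀) ∨ (∃ μ, TendsUpTo (D : Filter ↥A) μ) ∨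
      ∀ κ : Cardinal.{0}, ∀ᶠ (a : ↥A) in D, κ < (a : Cardinal) := by
  by_cases hbdd : ∃ ν : Cardinal.{0}, ∀ᶠ (a : ↥A) in D, (a : Cardinal) ≤ ν
  swap
  · exact Or.inr (Or.inr fun κ => by
      filter_upwards [Ultrafilter.eventually_not.2 (not_exists.1 hbdd κ)] with a ha
      exact lt_of_not_ge ha)
  set T := {ν : Cardinal.{0} | ∀ᶠ (a : ↥A) in D, (a : Cardinal) ≤ ν}
  have hT : sInf T ∈ T := csInf_mem hbdd
  by_cases hatom : ∀ᶠ (a : ↥A) in D, (a : Cardinal) = sInf T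
  · obtain ⟨a₀, ha₀⟩ := hatom.exists
    refine Or.inl ⟨a₀, ?_⟩
    filter_upwards [hatom] with a ha using Subtype.ext (ha.trans ha₀.symm)
  refine Or.inr (Or.inl ⟨sInf T, ?_, fun β hβ => ?_⟩)
  · filter_upwards [hT, Ultrafilter.eventually_not.2 hatom] with a h₁ h₂
    exact h₁.lt_of_ne h₂
  · have hβT : β ∉ T := notMem_of_lt_csInf hβ (OrderBot.bddBelow T)
    filter_upwards [Ultrafilter.eventually_not.2 hβT] with a ha using lt_of_not_ge ha

end PcfComputation

def withSuccLimitPts (A : Set Cardinal.{0}) : Set Cardinal.{0} :=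
  A ∪ {κ | ∃ μ, ℵ₀ ≤ μ ∧ IsLimitPt A μ ∧ κ = Order.succ μ}

theorem pcf_eq_withSuccLimitPts (hgch : SingularGCH) (hinacc : NoWeaklyInaccessible)
    {A : Set Cardinal.{0}} (hA : ∀ a ∈ A, a.IsRegular) : pcf A = withSuccLimitPts A := by
  ext κ
  constructor
  · rintro ⟨D, hκ⟩
    rcases eventually_eq_or_tendsUpTo_or_forall_eventually_lt D with
      ⟨a₀, hD⟩ | ⟨μ, hD⟩ | hD
    · rw [cofUlt_eq_of_eventually_eq hA hD, Cardinal.lift_inj] at hκ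
      exact Or.inl (hκ ▸ a₀.2)
    · rw [cofUlt_eq_succ_of_tendsUpTo hgch hinacc hA hD, Cardinal.lift_inj] at hκ
      exact Or.inr ⟨μ, (hD.aleph0_lt hA).le, hD.isLimitPt, hκ⟩
    · exact absurd hκ (lift_ne_cofUlt hA hD κ)
  · rintro (hκ | ⟨μ, hμ, hlim, rfl⟩)
    · let a₀ : ↥A := ⟨κ, hκ⟩
      have hD : ∀ᶠ (a : ↥A) in (pure a₀ : Ultrafilter ↥A), a = a₀ := by simp
      exact ⟨_, (cofUlt_eq_of_eventually_eq hA hD).symm⟩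
    · obtain ⟨D, hD⟩ := exists_ultrafilter_tendsUpTo hlim (aleph0_pos.trans_le hμ).ne'
      exact ⟨D, (cofUlt_eq_succ_of_tendsUpTo hgch hinacc hA hD).symm⟩

section Spec

variable {A : Set Cardinal.{0}}

lemma mem_spec_of_mem (hA : ∀ a ∈ A, a.IsRegular) {a₀ : Cardinal.{0}} (ha₀ : a₀ ∈ A) :
    a₀ ∈ spec A := by
  classical
  let i : ↥A := ⟨a₀, ha₀⟩
  have hreg := hA a₀ ha₀
  let e : Ordinal.{0} → ↥A → Ordinal.{0} := fun β => Pi.single i β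
  have he : Function.Injective e := fun β γ h => by simpa [e] using congrFun h i
  refine ⟨hreg, e '' Iio a₀.ord, ?_, ?_, ?_⟩
  · rintro _ ⟨β, hβ, rfl⟩ a
    by_cases ha : a = i
    · subst ha
      simpa [e] using hβ
    · simpa [e, ha] using zero_mem_piSet hA a
  · rw [mk_image_eq he, Cardinal.mk_Iio_ordinal, card_ord]
  · rintro F₀ hF₀ hF₀a₀ ⟨h, hh, hbd⟩
    have hsub : F₀ ⊆ e '' Iio (h i + 1) := by
      intro f hf
      obtain ⟨β, -, rfl⟩ := hF₀ hf
      exact ⟨β, Order.lt_add_one_iff.2 (by simpa [e] using hbd _ hf i), rfl⟩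
    exact ((mk_le_mk_of_subset hsub).trans_lt (mk_image_Iio_lt e
      ((isSuccLimit_ord hreg.aleph0_le).add_one_lt (hh i)))).ne hF₀a₀

lemma succ_mem_spec (hgch : SingularGCH) (hinacc : NoWeaklyInaccessible)
    (hA : ∀ a ∈ A, a.IsRegular) {D : Ultrafilter ↥A} {μ : Cardinal.{0}}
    (hD : TendsUpTo (D : Filter ↥A) μ) : Order.succ μ ∈ spec A := by
  have hμ := (hD.aleph0_lt hA).le
  have hsing := hinacc.not_isRegular (fun a ha => (hA a ha).aleph0_le) hD.isLimitPt
    (aleph0_pos.trans_le hμ).ne'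
  obtain ⟨S, hSA, hSκ, hS⟩ := exists_cofinalMod_mk_eq_cofUlt A D
  rw [cofUlt_eq_succ_of_tendsUpTo hgch hinacc hA hD] at hSκ
  obtain ⟨e, he⟩ := exists_subset_image_Iio hSκ.le
  obtain ⟨f, hf⟩ := exists_seq_dominating (R := fun g h => ∀ᶠ a in D, g a < h a)
    hμ (fun W hW hWμ => exists_eventually_lt_of_mk_le hA hμ hsing hD.2 hW hWμ) e
  have hinj : InjOn f (Iio (Order.succ μ).ord) := by
    intro i hi j hj hij
    by_contra hne
    rcases lt_or_gt_of_ne hne with h | h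
    · obtain ⟨a, ha⟩ := ((hf j hj).2.1 i h).exists
      exact ha.ne (congrFun hij a)
    · obtain ⟨a, ha⟩ := ((hf i hi).2.1 j h).exists
      exact ha.ne (congrFun hij a).symm
  refine ⟨isRegular_succ hμ, f '' Iio (Order.succ μ).ord, ?_, ?_, ?_⟩
  · rintro _ ⟨i, hi, rfl⟩
    exact (hf i hi).1
  · rw [mk_image_eq_of_injOn _ _ hinj, Cardinal.mk_Iio_ordinal, card_ord]
  -- A bound `h` of `F₀` lies below some `e j` modulo `D`, hence below every later `f i`.
  · rintro F₀ hF₀ hF₀κ ⟨h, hh, hbd⟩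
    obtain ⟨_, hg, hhg⟩ := hS _ (add_one_mem_piSet hA hh)
    obtain ⟨j, hj, rfl⟩ := he hg
    obtain ⟨i, hji, hi, hfi⟩ := exists_mem_Ico_of_mk_eq hF₀ hF₀κ hj
    obtain ⟨a, ha₁, ha₂⟩ := (hhg.and ((hf i hi).2.2 j hji (hSA hg))).exists
    exact (Order.lt_add_one_iff.2 (hbd _ hfi a)).not_ge (ha₁.trans ha₂.le)

lemma exists_eq_succ_of_le_mk_piSet (hgch : SingularGCH) (hinacc : NoWeaklyInaccessible)
    (hA : ∀ a ∈ A, a.IsRegular) {κ : Cardinal.{0}} (hκ : κ.IsRegular)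
    (hle : Cardinal.lift.{1} κ ≤ #(piSet (A ∩ Iio κ))) :
    ∃ μ, ℵ₀ ≤ μ ∧ IsLimitPt A μ ∧ κ = Order.succ μ := by
  set C := A ∩ Iio κ
  have hC : BddAbove C := ⟨κ, fun x hx => hx.2.le⟩
  have hCreg : ∀ a ∈ C, a.IsRegular := fun a ha => hA a ha.1
  have hbound := mk_piSet_le hgch hinacc hC hCreg
  have hnot : sSup C ∉ C := fun hmem =>
    (Cardinal.lift_le.1 (hle.trans (hbound.2 hmem))).not_gt hmem.2
  have hlim := isLimitPt_sSup hC hnot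
  have hlt : sSup C < κ := by
    refine (csSup_le' fun x hx => hx.2.le).lt_of_ne fun heq => ?_
    rw [heq] at hlim
    exact hinacc.not_isRegular (fun x hx => (hCreg x hx).aleph0_le) hlim hκ.pos.ne' hκ
  have hsucc : κ ≤ Order.succ (sSup C) := Cardinal.lift_le.1 (hle.trans hbound.1)
  refine ⟨sSup C, ?_, hlim.mono inter_subset_left, hsucc.antisymm (Order.succ_le_of_lt hlt)⟩
  by_contra! hfin
  exact (hκ.aleph0_le.trans hsucc).not_gt (isSuccLimit_aleph0.succ_lt hfin)

lemma bddIn_of_eq_below (hA : ∀ a ∈ A, a.IsRegular) {κ : Cardinal.{0}} (hκA : κ ∉ A)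
    {F : Set (↥A → Ordinal.{0})} (hFA : F ⊆ piSet A) (hFκ : #F ≤ Cardinal.lift.{1} κ)
    {g : ↥A → Ordinal.{0}} (hg : g ∈ piSet A)
    (hFg : ∀ f ∈ F, ∀ a : ↥A, (a : Cardinal) < κ → f a = g a) : BddIn A F := by
  have hbound : ∀ a : ↥A, ∃ β < (a : Cardinal).ord, ∀ f ∈ F, f a ≤ β := by
    intro a
    by_cases ha : (a : Cardinal) < κ
    · exact ⟨g a, hg a, fun f hf => (hFg f hf a ha).le⟩
    · have hκa : κ < a := (not_lt.1 ha).lt_of_ne fun h => hκA (h ▸ a.2)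
      obtain ⟨β, hβ, hlt⟩ :=
        exists_lt_ord_forall_apply_lt hA hFA a (hFκ.trans_lt (Cardinal.lift_lt.2 hκa))
      exact ⟨β, hβ, fun f hf => (hlt f hf).le⟩
  choose h hh hbd using hbound
  exact ⟨h, hh, fun f hf a => hbd a f hf⟩

lemma mem_withSuccLimitPts_of_mem_spec (hgch : SingularGCH) (hinacc : NoWeaklyInaccessible)
    (hA : ∀ a ∈ A, a.IsRegular) {κ : Cardinal.{0}} (hκ : κ ∈ spec A) :
    κ ∈ withSuccLimitPts A := by
  obtain ⟨hκreg, F, hFA, hFκ, hFunb⟩ := hκ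
  by_cases hκA : κ ∈ A
  · exact Or.inl hκA
  refine Or.inr (exists_eq_succ_of_le_mk_piSet hgch hinacc hA hκreg ?_)
  let s : Set ↥A := (↑) ⁻¹' Iio κ
  refine le_trans ?_
    ((mk_le_mk_of_subset (image_mono hFA)).trans (mk_image_indicator_le (Iio κ)))
  -- Otherwise, by pigeonhole, `κ` members of `F` agree below `κ`.
  by_contra! hsmall
  obtain ⟨⟨_, f₀, hf₀F, rfl⟩, F₀, hF₀F, hF₀κ, hF₀⟩ :=
    infinite_pigeonhole_set (s := F)
      (fun f => (⟨s.indicator f, mem_image_of_mem _ f.2⟩ : ↥(s.indicator '' F)))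
      (Cardinal.lift.{1} κ) hFκ.ge (by simpa using hκreg.aleph0_le)
      (by rwa [hκreg.lift.cof_ord])
  have hF₀le : #F₀ ≤ Cardinal.lift.{1} κ := (mk_le_mk_of_subset hF₀F).trans hFκ.le
  refine hFunb F₀ hF₀F (hF₀le.antisymm hF₀κ) <|
    bddIn_of_eq_below hA hκA (hF₀F.trans hFA) hF₀le (hFA hf₀F) fun f hf a ha => ?_
  simpa [indicator_of_mem (show a ∈ s from ha)] using congrFun (congrArg Subtype.val (hF₀ hf)) a

theorem spec_eq_withSuccLimitPts (hgch : SingularGCH) (hinacc : NoWeaklyInaccessible)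
    (hA : ∀ a ∈ A, a.IsRegular) : spec A = withSuccLimitPts A := by
  refine Subset.antisymm (fun κ hκ => mem_withSuccLimitPts_of_mem_spec hgch hinacc hA hκ) ?_
  rintro κ (hκ | ⟨μ, hμ, hlim, rfl⟩)
  · exact mem_spec_of_mem hA hκ
  · obtain ⟨D, hD⟩ := exists_ultrafilter_tendsUpTo hlim (aleph0_pos.trans_le hμ).ne'
    exact succ_mem_spec hgch hinacc hA hD

end Spec

/-- If `2^μ = μ⁺` for every singular cardinal `μ` and there are no
regular limit (i.e. weakly inaccessible) cardinals, then `spec(A) = pcf(A)` for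
every set `A` of infinite regular cardinals. -/
theorem statement10
    (hgch : ∀ μ : Cardinal.{0}, ℵ₀ ≤ μ → ¬ μ.IsRegular → 2 ^ μ = Order.succ μ)
    (hnoInacc : ∀ κ : Cardinal.{0},
      ¬ (ℵ₀ < κ ∧ κ.IsRegular ∧ ∀ ν < κ, Order.succ ν < κ))
    (A : Set Cardinal.{0}) (hA : ∀ a ∈ A, a.IsRegular) :
    spec A = pcf A := by
  rw [spec_eq_withSuccLimitPts hgch hnoInacc hA, pcf_eq_withSuccLimitPts hgch hnoInacc hA]

end TukeySpec
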